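/- Let q : ℝ → ℝ be twice continuously differentiable, satisfy the Painlevé II equation q''(s) = s·q(s) + 2·q(s)³ for all s ∈ ℝ, and satisfy the decay bound: there is a constant C with |q(s)| ≤ C·e^{−s} and |q'(s)| ≤ C·e^{−s} for all s ≥ 0. Define F(s) := exp(−∫_s^∞ (x−s)·q(x)² dx), u₀₀(s) := ∫_s^∞ q(x)² dx, q₁ := q' + u₀₀·q, and u₁₁(s) := ∫_s^∞ q₁(x)² dx. Then for every s ∈ ℝ, F(s)·u₁₁(s) = −(s/3)·F'(s) + (1/3)·F'''(s). -/

import Mathlib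

/-!
Since `F = exp (-∫_s^∞ (x - s) q²)`, differentiating under the tail integral gives
`F' = u₀₀ F`, `F'' = (u₀₀² - q²) F` and `F''' = (u₀₀³ - 3 u₀₀ q² - 2 q q') F`.
The claim is therefore the identity `3 u₁₁ = u₀₀³ - 3 u₀₀ q² - 2 q q' - s u₀₀`.
Both sides have the same derivative once the Painlevé II first integral
`u₀₀ = q'² - s q² - q⁴` is known, and that one holds because its derivative vanishes
by the equation. Each time the two sides agree at `+∞` thanks to the exponential decay
of `q` and `q'`.
-/

open MeasureTheory Set Filter Topology Asymptotics Real

section TailIntegral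

variable {g : ℝ → ℝ}

theorem hasDerivAt_integral_Ioi (hg : Continuous g) (hint : ∀ a, IntegrableOn g (Ioi a))
    (s : ℝ) : HasDerivAt (fun t => ∫ x in Ioi t, g x) (-g s) s := by
  have hsplit : (fun t => ∫ x in Ioi t, g x)
      = fun t => (∫ x in Ioi 0, g x) - ∫ x in 0..t, g x := by
    funext t
    rw [← intervalIntegral.integral_Ioi_sub_Ioi' (hint 0) (hint t)]
    ring
  rw [hsplit]
  simpa using (hg.integral_hasStrictDerivAt 0 s).hasDerivAt.const_sub _

theorem tendsto_integral_Ioi_atTop {a : ℝ} (hint : IntegrableOn g (Ioi a)) :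
    Tendsto (fun t => ∫ x in Ioi t, g x) atTop (𝓝 0) := by
  have h := (intervalIntegral_tendsto_integral_Ioi a hint tendsto_id).const_sub
    (∫ x in Ioi a, g x)
  rw [sub_self] at h
  refine h.congr' ?_
  filter_upwards [eventually_ge_atTop a] with t ht
  rw [id_eq, ← intervalIntegral.integral_Ioi_sub_Ioi hint ht, sub_sub_cancel]

theorem hasDerivAt_integral_Ioi_sub_mul (hg : Continuous g) (hint : ∀ a, IntegrableOn g (Ioi a))
    (hint' : ∀ a, IntegrableOn (fun x => x * g x) (Ioi a)) (s : ℝ) :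
    HasDerivAt (fun t => ∫ x in Ioi t, (x - t) * g x) (-∫ x in Ioi s, g x) s := by
  have hsplit : (fun t => ∫ x in Ioi t, (x - t) * g x)
      = fun t => (∫ x in Ioi t, x * g x) - t * ∫ x in Ioi t, g x := by
    funext t
    simp_rw [sub_mul]
    rw [integral_sub (hint' t) ((hint t).const_mul t), integral_const_mul]
  rw [hsplit]
  have hxg := hasDerivAt_integral_Ioi (g := fun x => x * g x) (continuous_id.mul hg) hint' s
  refine (hxg.fun_sub ((hasDerivAt_id' s).fun_mul (hasDerivAt_integral_Ioi hg hint s)))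
    |>.congr_deriv ?_
  ring

end TailIntegral

section ExponentialDecay

theorem Filter.Tendsto.mul_isBigO {α : Type*} {l : Filter α} {f g φ : α → ℝ} {c : ℝ}
    (hg : Tendsto g l (𝓝 c)) (hf : f =O[l] φ) : (fun x => g x * f x) =O[l] φ := by
  simpa using (hg.isBigO_one ℝ).mul hf

variable {f : ℝ → ℝ}

theorem isBigO_exp_neg_of_abs_le {C : ℝ} (h : ∀ x, 0 ≤ x → |f x| ≤ C * exp (-x)) :
    f =O[atTop] fun x => exp (-x) :=
  IsBigO.of_bound C <| by
    filter_upwards [eventually_ge_atTop 0] with x hx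
    simpa [abs_exp] using h x hx

theorem tendsto_id_mul_of_isBigO_exp_neg (hf : f =O[atTop] fun x => exp (-x)) :
    Tendsto (fun x => x * f x) atTop (𝓝 0) :=
  ((isBigO_refl (fun x : ℝ => x) atTop).mul hf).trans_tendsto
    (by simpa using tendsto_pow_mul_exp_neg_atTop_nhds_zero 1)

theorem integrableOn_Ioi_of_isBigO_exp_neg (hf : Continuous f)
    (ho : f =O[atTop] fun x => exp (-x)) (a : ℝ) : IntegrableOn f (Ioi a) :=
  integrable_of_isBigO_exp_neg one_pos hf.continuousOn (by simpa using ho)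

theorem isBigO_exp_neg_sq (ho : f =O[atTop] fun x => exp (-x)) :
    (fun x => f x ^ 2) =O[atTop] fun x => exp (-x) :=
  ((ho.trans_tendsto tendsto_exp_neg_atTop_nhds_zero).mul_isBigO ho).congr_left
    fun x => (sq (f x)).symm

theorem hasDerivAt_integral_Ioi_sq (hf : Continuous f) (ho : f =O[atTop] fun x => exp (-x))
    (s : ℝ) : HasDerivAt (fun t => ∫ x in Ioi t, f x ^ 2) (-(f s ^ 2)) s :=
  hasDerivAt_integral_Ioi (by fun_prop)
    (integrableOn_Ioi_of_isBigO_exp_neg (by fun_prop) (isBigO_exp_neg_sq ho)) s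

theorem tendsto_integral_Ioi_sq (hf : Continuous f) (ho : f =O[atTop] fun x => exp (-x)) :
    Tendsto (fun t => ∫ x in Ioi t, f x ^ 2) atTop (𝓝 0) :=
  tendsto_integral_Ioi_atTop
    (integrableOn_Ioi_of_isBigO_exp_neg (by fun_prop) (isBigO_exp_neg_sq ho) 0)

theorem hasDerivAt_exp_neg_integral_Ioi_sub_mul_sq (hf : Continuous f)
    (ho : f =O[atTop] fun x => exp (-x)) (s : ℝ) :
    HasDerivAt (fun t => exp (-∫ x in Ioi t, (x - t) * f x ^ 2))
      ((∫ x in Ioi s, f x ^ 2) * exp (-∫ x in Ioi s, (x - s) * f x ^ 2)) s := by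
  have hint := integrableOn_Ioi_of_isBigO_exp_neg (by fun_prop) (isBigO_exp_neg_sq ho)
  have hint' : ∀ a, IntegrableOn (fun x => x * f x ^ 2) (Ioi a) :=
    integrableOn_Ioi_of_isBigO_exp_neg (by fun_prop)
      (((tendsto_id_mul_of_isBigO_exp_neg ho).mul_isBigO ho).congr_left fun x => by ring)
  refine (hasDerivAt_integral_Ioi_sub_mul (by fun_prop) hint hint' s).fun_neg.exp.congr_deriv ?_
  rw [neg_neg, mul_comm]

end ExponentialDecay

theorem hasDerivAt_deriv_of_contDiff_two {f : ℝ → ℝ} (hf : ContDiff ℝ 2 f) (x : ℝ) :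
    HasDerivAt (deriv f) (iteratedDeriv 2 f x) x := by
  rw [iteratedDeriv_succ, iteratedDeriv_one]
  exact ((hf.iterate_deriv' 1 1).differentiable one_ne_zero x).hasDerivAt

theorem eq_of_hasDerivAt_zero_of_tendsto_atTop {f : ℝ → ℝ} {c : ℝ}
    (hf : ∀ x, HasDerivAt f 0 x) (hlim : Tendsto f atTop (𝓝 c)) (x : ℝ) : f x = c := by
  have hconst : f = fun _ => f x := funext fun y =>
    is_const_of_deriv_eq_zero (fun z => (hf z).differentiableAt) (fun z => (hf z).deriv) y x
  rw [hconst] at hlim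
  exact tendsto_nhds_unique tendsto_const_nhds hlim

theorem iteratedDeriv_three_eq_of_hasDerivAt {F u q q' : ℝ → ℝ}
    (hF : ∀ s, HasDerivAt F (u s * F s) s) (hu : ∀ s, HasDerivAt u (-(q s ^ 2)) s)
    (hq : ∀ s, HasDerivAt q (q' s) s) (s : ℝ) :
    iteratedDeriv 3 F s = (u s ^ 3 - 3 * u s * q s ^ 2 - 2 * q s * q' s) * F s := by
  have h1 : deriv F = fun s => u s * F s := funext fun s => (hF s).deriv
  have h2 : deriv (deriv F) = fun s => (u s ^ 2 - q s ^ 2) * F s := by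
    funext s
    rw [h1]
    exact ((hu s).mul (hF s)).deriv.trans (by ring)
  have h3 : HasDerivAt (deriv (deriv F))
      ((u s ^ 3 - 3 * u s * q s ^ 2 - 2 * q s * q' s) * F s) s := by
    rw [h2]
    refine ((((hu s).fun_pow 2).fun_sub ((hq s).fun_pow 2)).fun_mul (hF s)).congr_deriv ?_
    push_cast
    ring
  rw [iteratedDeriv_succ, iteratedDeriv_succ, iteratedDeriv_one, h3.deriv]

section PainleveII

variable {q q' u v : ℝ → ℝ}

theorem painleveII_first_integral (hq : ∀ s, HasDerivAt q (q' s) s)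
    (hq' : ∀ s, HasDerivAt q' (s * q s + 2 * q s ^ 3) s) (hu : ∀ s, HasDerivAt u (-(q s ^ 2)) s)
    (hq0 : Tendsto q atTop (𝓝 0)) (hq'0 : Tendsto q' atTop (𝓝 0))
    (hsq : Tendsto (fun s => s * q s) atTop (𝓝 0)) (hu0 : Tendsto u atTop (𝓝 0)) (s : ℝ) :
    u s = q' s ^ 2 - s * q s ^ 2 - q s ^ 4 := by
  have hderiv : ∀ x, HasDerivAt (fun x => q' x ^ 2 - x * q x ^ 2 - q x ^ 4 - u x) 0 x := by
    intro x
    refine ((((hq' x).fun_pow 2).fun_sub ((hasDerivAt_id' x).fun_mul ((hq x).fun_pow 2)))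
      |>.fun_sub ((hq x).fun_pow 4)).fun_sub (hu x) |>.congr_deriv ?_
    push_cast
    ring
  have hlim : Tendsto (fun x => q' x ^ 2 - x * q x ^ 2 - q x ^ 4 - u x) atTop (𝓝 0) := by
    have h := (((hq'0.pow 2).sub (hsq.mul hq0)).sub (hq0.pow 4)).sub hu0
    norm_num at h
    exact h.congr fun x => by ring
  linarith [eq_of_hasDerivAt_zero_of_tendsto_atTop hderiv hlim s]

theorem painleveII_tail_identity (hq : ∀ s, HasDerivAt q (q' s) s)
    (hq' : ∀ s, HasDerivAt q' (s * q s + 2 * q s ^ 3) s) (hu : ∀ s, HasDerivAt u (-(q s ^ 2)) s)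
    (hv : ∀ s, HasDerivAt v (-(q' s + u s * q s) ^ 2) s)
    (hq0 : Tendsto q atTop (𝓝 0)) (hq'0 : Tendsto q' atTop (𝓝 0))
    (hsq : Tendsto (fun s => s * q s) atTop (𝓝 0))
    (hsq' : Tendsto (fun s => s * q' s) atTop (𝓝 0)) (hu0 : Tendsto u atTop (𝓝 0))
    (hv0 : Tendsto v atTop (𝓝 0)) (s : ℝ) :
    3 * v s = u s ^ 3 - 3 * u s * q s ^ 2 - 2 * q s * q' s - s * u s := by
  have hfirst := painleveII_first_integral hq hq' hu hq0 hq'0 hsq hu0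
  have hderiv : ∀ x, HasDerivAt (fun x => 3 * v x - u x ^ 3 + 3 * u x * q x ^ 2
      + 2 * q x * q' x + x * u x) 0 x := by
    intro x
    refine (((((hv x).const_mul 3).fun_sub ((hu x).fun_pow 3)).fun_add
      (((hu x).const_mul 3).fun_mul ((hq x).fun_pow 2))).fun_add
      (((hq x).const_mul 2).fun_mul (hq' x))).fun_add ((hasDerivAt_id' x).fun_mul (hu x))
      |>.congr_deriv ?_
    push_cast
    linear_combination hfirst x
  have hsu : Tendsto (fun x => x * u x) atTop (𝓝 0) := by
    have h := ((hsq'.mul hq'0).sub (hsq.pow 2)).sub (hsq.mul (hq0.pow 3))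
    norm_num at h
    exact h.congr fun x => by rw [hfirst x]; ring
  have hlim : Tendsto (fun x => 3 * v x - u x ^ 3 + 3 * u x * q x ^ 2
      + 2 * q x * q' x + x * u x) atTop (𝓝 0) := by
    have h := ((((hv0.const_mul 3).sub (hu0.pow 3)).add ((hu0.const_mul 3).mul (hq0.pow 2))).add
      ((hq0.const_mul 2).mul hq'0)).add hsu
    norm_num at h
    exact h
  linarith [eq_of_hasDerivAt_zero_of_tendsto_atTop hderiv hlim s]

end PainleveII

/-- The table identity `u₁₁·F = -(s/3)·F' + (1/3)·F'''`, where
`F(s) = exp(-∫_s^∞ (x-s) q(x)² dx)`, `u₀₀(s) = ∫_s^∞ q(x)² dx`, `q₁ = q' + u₀₀·q`,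
`u₁₁(s) = ∫_s^∞ q₁(x)² dx`, and `q` is a Painlevé II solution with exponential
decay at `+∞`. -/
theorem F_u11_eq (q F u00 q1 u11 : ℝ → ℝ) (hq : ContDiff ℝ 2 q)
    (hP2 : ∀ s : ℝ, iteratedDeriv 2 q s = s * q s + 2 * q s ^ 3)
    (C : ℝ)
    (hdecay : ∀ s : ℝ, 0 ≤ s →
      |q s| ≤ C * Real.exp (-s) ∧ |deriv q s| ≤ C * Real.exp (-s))
    (hF : ∀ s : ℝ, F s = Real.exp (-(∫ x in Set.Ioi s, (x - s) * q x ^ 2)))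
    (hu00 : ∀ s : ℝ, u00 s = ∫ x in Set.Ioi s, q x ^ 2)
    (hq1 : ∀ s : ℝ, q1 s = deriv q s + u00 s * q s)
    (hu11 : ∀ s : ℝ, u11 s = ∫ x in Set.Ioi s, q1 x ^ 2) :
    ∀ s : ℝ, F s * u11 s = -(s / 3) * deriv F s + (1 / 3) * iteratedDeriv 3 F s := by
  have hq_d (s : ℝ) : HasDerivAt q (deriv q s) s := (hq.differentiable two_ne_zero s).hasDerivAt
  have hq'_d (s : ℝ) : HasDerivAt (deriv q) (s * q s + 2 * q s ^ 3) s :=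
    hP2 s ▸ hasDerivAt_deriv_of_contDiff_two hq s
  have hq_O := isBigO_exp_neg_of_abs_le fun s hs => (hdecay s hs).1
  have hq'_O := isBigO_exp_neg_of_abs_le fun s hs => (hdecay s hs).2
  have hu00_d : ∀ s, HasDerivAt u00 (-(q s ^ 2)) s :=
    funext hu00 ▸ hasDerivAt_integral_Ioi_sq hq.continuous hq_O
  have hu00_lim : Tendsto u00 atTop (𝓝 0) :=
    funext hu00 ▸ tendsto_integral_Ioi_sq hq.continuous hq_O
  have hq1_eq : q1 = fun s => deriv q s + u00 s * q s := funext hq1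
  have hq1_cont : Continuous q1 := hq1_eq ▸ (hq.continuous_deriv one_le_two).add
    ((continuous_iff_continuousAt.2 fun s => (hu00_d s).continuousAt).mul hq.continuous)
  have hq1_O : q1 =O[atTop] fun x => exp (-x) := hq1_eq ▸ hq'_O.add (hu00_lim.mul_isBigO hq_O)
  have hu11_d (s : ℝ) : HasDerivAt u11 (-(deriv q s + u00 s * q s) ^ 2) s := by
    rw [← hq1 s, funext hu11]
    exact hasDerivAt_integral_Ioi_sq hq1_cont hq1_O s
  have hu11_lim : Tendsto u11 atTop (𝓝 0) :=
    funext hu11 ▸ tendsto_integral_Ioi_sq hq1_cont hq1_O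
  have hF_d (s : ℝ) : HasDerivAt F (u00 s * F s) s := by
    rw [funext hF, hu00 s]
    exact hasDerivAt_exp_neg_integral_Ioi_sub_mul_sq hq.continuous hq_O s
  intro s
  rw [iteratedDeriv_three_eq_of_hasDerivAt hF_d hu00_d hq_d, (hF_d s).deriv]
  linear_combination (F s / 3) * painleveII_tail_identity hq_d hq'_d hu00_d hu11_d
    (hq_O.trans_tendsto tendsto_exp_neg_atTop_nhds_zero)
    (hq'_O.trans_tendsto tendsto_exp_neg_atTop_nhds_zero)
    (tendsto_id_mul_of_isBigO_exp_neg hq_O) (tendsto_id_mul_of_isBigO_exp_neg hq'_O)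
    hu00_lim hu11_lim s
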